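/- arXiv:math/9912022 — 2 statements merged into one kernel-verified Lean document; each statement's English description precedes it below -/
import Mathlib

section
/- A bipartite graph G has a perfect matching if and only if the intersection of all maximum stable sets of G is empty. -/
open Finset

variable {V : Type*}

/-- A stable (independent) set of vertices. -/
def IsStableSet (G : SimpleGraph V) (s : Finset V) : Prop :=
  ∀ x ∈ s, ∀ y ∈ s, ¬ G.Adj x y

/-- The stability number α(G). -/
noncomputable def stabNum (G : SimpleGraph V) : ℕ :=
  sSup {n | ∃ s : Finset V, IsStableSet G s ∧ s.card = n}

/-- A matching: a set of edges of `G`, pairwise vertex-disjoint. -/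
def IsMatchingSet (G : SimpleGraph V) (M : Finset (Sym2 V)) : Prop :=
  (∀ e ∈ M, e ∈ G.edgeSet) ∧
    ∀ e ∈ M, ∀ f ∈ M, e ≠ f → ∀ v : V, v ∈ e → v ∉ f

/-- The matching number μ(G). -/
noncomputable def matchNum (G : SimpleGraph V) : ℕ :=
  sSup {n | ∃ M : Finset (Sym2 V), IsMatchingSet G M ∧ M.card = n}

/-- A maximum stable set. -/
def IsMaxStableSet (G : SimpleGraph V) (s : Finset V) : Prop :=
  IsStableSet G s ∧ s.card = stabNum G

/-- A maximum matching. -/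
def IsMaxMatching (G : SimpleGraph V) (M : Finset (Sym2 V)) : Prop :=
  IsMatchingSet G M ∧ M.card = matchNum G

/-- A perfect matching: a matching covering all vertices. -/
def IsPerfectMatchingSet (G : SimpleGraph V) (M : Finset (Sym2 V)) : Prop :=
  IsMatchingSet G M ∧ ∀ v : V, ∃ e ∈ M, v ∈ e

def HasPerfectMatching (G : SimpleGraph V) : Prop :=
  ∃ M, IsPerfectMatchingSet G M

/-- A near-perfect matching: exactly one vertex is uncovered. -/
def HasNearPerfectMatching (G : SimpleGraph V) : Prop :=
  ∃ M, IsMatchingSet G M ∧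
    ∃ u : V, (∀ e ∈ M, u ∉ e) ∧ ∀ v : V, v ≠ u → ∃ e ∈ M, v ∈ e

/-- A König-Egerváry graph: α(G) + μ(G) = |V(G)|. -/
def KonigEgervary (G : SimpleGraph V) : Prop :=
  stabNum G + matchNum G = Nat.card V

/-- G is α⁺-stable: adding any new edge leaves the stability number unchanged. -/
def AlphaPlusStable (G : SimpleGraph V) : Prop :=
  ∀ u v : V, u ≠ v → ¬ G.Adj u v →
    stabNum (G ⊔ SimpleGraph.fromEdgeSet {s(u, v)}) = stabNum G

/-- A blossom relative to the matching `M`: an odd cycle `x₀x₁…x₂ₖx₀` whose edges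
`x₁x₂, x₃x₄, …, x₂ₖ₋₁x₂ₖ` belong to `M`. -/
def HasBlossom (G : SimpleGraph V) (M : Finset (Sym2 V)) : Prop :=
  ∃ k : ℕ, 0 < k ∧ ∃ x : ℕ → V,
    (∀ i, i ≤ 2 * k → ∀ j, j ≤ 2 * k → x i = x j → i = j) ∧
    (∀ i < 2 * k, G.Adj (x i) (x (i + 1))) ∧
    G.Adj (x (2 * k)) (x 0) ∧
    ∀ i < k, s(x (2 * i + 1), x (2 * i + 2)) ∈ M

/-- G is blossom-free: no blossom relative to any maximum matching. -/
def BlossomFree (G : SimpleGraph V) : Prop :=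
  ∀ M : Finset (Sym2 V), IsMaxMatching G M → ¬ HasBlossom G M


/-!
If `M` is a perfect matching of a bipartite graph, every stable set has at most `|M|` vertices
while each colour class has at least `|M|`; so both colour classes are maximum stable sets, and
they are disjoint.

Conversely, let `A ∪ B` be the bipartition and `d(X) = |X| - |N(X)|` the deficiency of `X ⊆ A`.
For `X ⊆ A` the set `X ∪ (B \ N(X))` is stable, and a stable set `S` has at most `|B| + d(S ∩ A)`
vertices; hence `α(G) = |B| + max d`, and `S ∩ A` maximizes `d` for every maximum stable set `S`.
The deficiency is supermodular, so it has a least maximizer `X₀`, which therefore lies in every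
maximum stable set. An empty core forces `X₀ = ∅`, i.e. `max d = 0`: this is Hall's condition for
`A`, and symmetrically for `B`. Hall's theorem and Schröder–Bernstein then give a perfect matching.
-/

open SimpleGraph

section StabilityNumber

variable [Fintype V] {G : SimpleGraph V}

lemma bddAbove_card_isStableSet (G : SimpleGraph V) :
    BddAbove {n | ∃ s : Finset V, IsStableSet G s ∧ s.card = n} :=
  ⟨Fintype.card V, by rintro n ⟨s, -, rfl⟩; exact s.card_le_univ⟩

lemma IsStableSet.card_le_stabNum {s : Finset V} (hs : IsStableSet G s) : #s ≤ stabNum G :=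
  le_csSup (bddAbove_card_isStableSet G) ⟨s, hs, rfl⟩

lemma exists_isMaxStableSet (G : SimpleGraph V) : ∃ s, IsMaxStableSet G s := by
  obtain ⟨s, hs, hcard⟩ := Nat.sSup_mem (s := {n | ∃ s : Finset V, IsStableSet G s ∧ s.card = n})
    ⟨0, ∅, fun _ h => absurd h (notMem_empty _), rfl⟩ (bddAbove_card_isStableSet G)
  exact ⟨s, hs, hcard⟩

lemma IsStableSet.isMaxStableSet_of_forall_card_le {s : Finset V} (hs : IsStableSet G s)
    (hmax : ∀ t, IsStableSet G t → #t ≤ #s) : IsMaxStableSet G s := by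
  obtain ⟨t, ht, htcard⟩ := exists_isMaxStableSet G
  exact ⟨hs, hs.card_le_stabNum.antisymm (htcard ▸ hmax t ht)⟩

end StabilityNumber

lemma exists_maximizer_subset_forall_maximizer_of_supermodular {α : Type*} [DecidableEq α]
    (A : Finset α) (f : Finset α → ℤ)
    (hf : ∀ X ⊆ A, ∀ Y ⊆ A, f X + f Y ≤ f (X ∪ Y) + f (X ∩ Y)) :
    ∃ X₀ ⊆ A, (∀ Y ⊆ A, f Y ≤ f X₀) ∧ ∀ Y ⊆ A, f Y = f X₀ → X₀ ⊆ Y := by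
  obtain ⟨X₁, hX₁A, hX₁max⟩ := A.powerset.exists_max_image f ⟨∅, empty_mem_powerset A⟩
  obtain ⟨X₀, hX₀, hX₀min⟩ := {Y ∈ A.powerset | f Y = f X₁}.exists_min_image card
    ⟨X₁, mem_filter.2 ⟨hX₁A, rfl⟩⟩
  simp only [mem_filter, mem_powerset, and_imp] at hX₁A hX₁max hX₀ hX₀min
  obtain ⟨hX₀A, hX₀eq⟩ := hX₀
  refine ⟨X₀, hX₀A, fun Y hY => hX₀eq ▸ hX₁max Y hY, fun Y hY hYeq => ?_⟩
  have hinterA : X₀ ∩ Y ⊆ A := inter_subset_left.trans hX₀A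
  -- the union is no better than a maximizer, so by supermodularity the intersection is one
  have hinter : f (X₀ ∩ Y) = f X₁ := by
    have := hf X₀ hX₀A Y hY
    have := hX₁max _ (union_subset hX₀A hY)
    have := hX₁max _ hinterA
    omega
  exact inter_eq_left.1 <|
    eq_of_subset_of_card_le inter_subset_left (hX₀min _ hinterA hinter)

section Deficiency

variable [Fintype V] [DecidableEq V] (G : SimpleGraph V) [DecidableRel G.Adj]

def neighborhood (X : Finset V) : Finset V :=
  X.biUnion (G.neighborFinset ·)

variable {G} in
@[simp]
lemma mem_neighborhood {X : Finset V} {v : V} : v ∈ neighborhood G X ↔ ∃ x ∈ X, G.Adj x v := by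
  simp [neighborhood]

def deficiency (X : Finset V) : ℤ :=
  #X - #(neighborhood G X)

@[simp]
lemma deficiency_empty : deficiency G ∅ = 0 := by
  simp [deficiency, neighborhood]

lemma deficiency_add_deficiency_le (X Y : Finset V) :
    deficiency G X + deficiency G Y ≤ deficiency G (X ∪ Y) + deficiency G (X ∩ Y) := by
  have hN : neighborhood G (X ∩ Y) ⊆ neighborhood G X ∩ neighborhood G Y :=
    subset_inter (biUnion_subset_biUnion_of_subset_left _ inter_subset_left)
      (biUnion_subset_biUnion_of_subset_left _ inter_subset_right)
  have := card_le_card hN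
  have := card_union_add_card_inter X Y
  have := card_union_add_card_inter (neighborhood G X) (neighborhood G Y)
  simp only [deficiency, neighborhood, union_biUnion] at *
  omega

end Deficiency

namespace SimpleGraph.Coloring

variable [Fintype V] {G : SimpleGraph V} {α : Type*} [DecidableEq α] (C : G.Coloring α)

def colorFinset (c : α) : Finset V :=
  {v | C v = c}

variable {C} in
@[simp]
lemma mem_colorFinset {c : α} {v : V} : v ∈ C.colorFinset c ↔ C v = c := by
  simp [colorFinset]

lemma isStableSet_colorFinset (c : α) : IsStableSet G (C.colorFinset c) := by
  intro x hx y hy hxy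
  rw [mem_colorFinset] at hx hy
  exact C.valid hxy (hx.trans hy.symm)

end SimpleGraph.Coloring

lemma IsPerfectMatchingSet.card_le_of_isStableSet {G : SimpleGraph V} {M : Finset (Sym2 V)}
    (hM : IsPerfectMatchingSet G M) {s : Finset V} (hs : IsStableSet G s) : #s ≤ #M := by
  refine card_le_card_of_forall_subsingleton (· ∈ ·) (fun x _ => hM.2 x) ?_
  rintro e he x ⟨hxs, hxe⟩ y ⟨hys, hye⟩
  by_contra hxy
  have hedge := hM.1.1 e he
  rw [(Sym2.mem_and_mem_iff hxy).1 ⟨hxe, hye⟩, SimpleGraph.mem_edgeSet] at hedge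
  exact hs x hxs y hys hedge

lemma IsMatchingSet.card_le_card_colorFinset [Fintype V] {G : SimpleGraph V}
    {M : Finset (Sym2 V)} (hM : IsMatchingSet G M) (C : G.Coloring Bool) (c : Bool) :
    #M ≤ #(C.colorFinset c) := by
  refine card_le_card_of_forall_subsingleton (fun e v => v ∈ e) (fun e he => ?_) ?_
  · induction e using Sym2.ind with
    | _ x y =>
      have hxy : C x ≠ C y := C.valid (hM.1 _ he)
      by_cases hx : C x = c
      · exact ⟨x, Coloring.mem_colorFinset.2 hx, Sym2.mem_mk_left x y⟩
      · exact ⟨y, Coloring.mem_colorFinset.2 (by cases c <;> simp_all), Sym2.mem_mk_right x y⟩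
  · rintro v - e ⟨he, hve⟩ f ⟨hf, hvf⟩
    by_contra hef
    exact hM.2 e he f hf hef v hve hvf

section Bipartite

variable [Fintype V] [DecidableEq V] {G : SimpleGraph V} [DecidableRel G.Adj]
  (C : G.Coloring Bool)

lemma neighborhood_subset_colorFinset {c : Bool} {X : Finset V} (hX : ∀ x ∈ X, C x = c) :
    neighborhood G X ⊆ C.colorFinset (!c) := by
  intro v hv
  obtain ⟨x, hx, hxv⟩ := mem_neighborhood.1 hv
  rw [Coloring.mem_colorFinset, ← hX x hx, Bool.eq_not_iff]
  exact (C.valid hxv).symm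

lemma card_colorFinset_add_deficiency_le_stabNum {c : Bool} {X : Finset V}
    (hX : ∀ x ∈ X, C x = c) : #(C.colorFinset (!c)) + deficiency G X ≤ stabNum G := by
  have hN := neighborhood_subset_colorFinset C hX
  have hdisj : Disjoint X (C.colorFinset (!c) \ neighborhood G X) := by
    refine disjoint_left.2 fun x hx hx' => ?_
    simp [hX x hx] at hx'
  have hstable : IsStableSet G (X ∪ (C.colorFinset (!c) \ neighborhood G X)) := by
    intro x hx y hy hxy
    simp only [mem_union, mem_sdiff, Coloring.mem_colorFinset] at hx hy
    rcases hx with hx | ⟨hx, hxN⟩ <;> rcases hy with hy | ⟨hy, hyN⟩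
    · exact C.valid hxy ((hX x hx).trans (hX y hy).symm)
    · exact hyN (mem_neighborhood.2 ⟨x, hx, hxy⟩)
    · exact hxN (mem_neighborhood.2 ⟨y, hy, hxy.symm⟩)
    · exact C.valid hxy (hx.trans hy.symm)
  have := card_le_card hN
  have := hstable.card_le_stabNum
  rw [card_union_of_disjoint hdisj, card_sdiff_of_subset hN] at this
  simp only [deficiency]
  omega

lemma IsStableSet.card_le_card_colorFinset_add_deficiency {S : Finset V} (hS : IsStableSet G S)
    (c : Bool) : #S ≤ #(C.colorFinset (!c)) + deficiency G {v ∈ S | C v = c} := by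
  have hN := neighborhood_subset_colorFinset C (c := c) (X := {v ∈ S | C v = c}) (by simp)
  have hrest : {v ∈ S | ¬C v = c} ⊆ C.colorFinset (!c) \ neighborhood G {v ∈ S | C v = c} := by
    intro y hy
    simp only [mem_filter, mem_sdiff, Coloring.mem_colorFinset, mem_neighborhood] at hy ⊢
    refine ⟨Bool.eq_not_iff.2 hy.2, ?_⟩
    rintro ⟨x, ⟨hx, -⟩, hxy⟩
    exact hS x hx y hy.1 hxy
  have := card_le_card hrest
  have := card_le_card hN
  have := card_filter_add_card_filter_not (s := S) (fun v => C v = c)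
  rw [card_sdiff_of_subset hN] at *
  simp only [deficiency]
  omega

end Bipartite

lemma SimpleGraph.Subgraph.IsPerfectMatching.hasPerfectMatching [Finite V] {G : SimpleGraph V}
    {M : G.Subgraph} (hM : M.IsPerfectMatching) : HasPerfectMatching G := by
  refine ⟨M.edgeSet.toFinite.toFinset,
    ⟨fun e he => M.edgeSet_subset ((Set.Finite.mem_toFinset _).1 he), ?_⟩, fun v => ?_⟩
  · intro e he f hf hef v hve hvf
    rw [Set.Finite.mem_toFinset, ← Sym2.other_spec hve, Subgraph.mem_edgeSet] at he
    rw [Set.Finite.mem_toFinset, ← Sym2.other_spec hvf, Subgraph.mem_edgeSet] at hf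
    rw [← Sym2.other_spec hve, ← Sym2.other_spec hvf, hM.1.eq_of_adj_left he hf] at hef
    exact hef rfl
  · obtain ⟨w, hvw, -⟩ := hM.1 (hM.2 v)
    exact ⟨s(v, w), by simpa using hvw, Sym2.mem_mk_left v w⟩

lemma HasPerfectMatching.exists_isMaxStableSet_notMem [Fintype V] {G : SimpleGraph V}
    (hM : HasPerfectMatching G) (C : G.Coloring Bool) (v : V) :
    ∃ S, IsMaxStableSet G S ∧ v ∉ S := by
  obtain ⟨M, hM⟩ := hM
  refine ⟨C.colorFinset (!C v), ?_, by simp⟩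
  exact (C.isStableSet_colorFinset _).isMaxStableSet_of_forall_card_le fun S hS =>
    (hM.card_le_of_isStableSet hS).trans (hM.1.card_le_card_colorFinset C _)

section HallCondition

variable [Fintype V] [DecidableEq V] {G : SimpleGraph V} [DecidableRel G.Adj]
  (C : G.Coloring Bool)

lemma deficiency_le_zero_of_forall_exists_notMem
    (hcore : ∀ v, ∃ S, IsMaxStableSet G S ∧ v ∉ S) {c : Bool} {X : Finset V}
    (hX : ∀ x ∈ X, C x = c) : deficiency G X ≤ 0 := by
  obtain ⟨X₀, hX₀c, hX₀max, hX₀least⟩ :=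
    exists_maximizer_subset_forall_maximizer_of_supermodular (C.colorFinset c) (deficiency G)
      fun X _ Y _ => deficiency_add_deficiency_le G X Y
  by_contra! hpos
  obtain ⟨v, hv⟩ : X₀.Nonempty := by
    rw [nonempty_iff_ne_empty]
    rintro rfl
    have := hX₀max X fun x hx => Coloring.mem_colorFinset.2 (hX x hx)
    simp only [deficiency_empty] at this
    omega
  obtain ⟨S, ⟨hS, hScard⟩, hvS⟩ := hcore v
  have hSc : {v ∈ S | C v = c} ⊆ C.colorFinset c := fun x hx => by simp_all
  have hdefS : deficiency G {v ∈ S | C v = c} = deficiency G X₀ := by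
    have := hS.card_le_card_colorFinset_add_deficiency C c
    have := card_colorFinset_add_deficiency_le_stabNum C fun x hx =>
      Coloring.mem_colorFinset.1 (hX₀c hx)
    have := hX₀max _ hSc
    omega
  exact hvS (mem_filter.1 (hX₀least _ hSc hdefS hv)).1

lemma exists_injective_adj_of_deficiency_le_zero {c : Bool}
    (hdef : ∀ X : Finset V, (∀ x ∈ X, C x = c) → deficiency G X ≤ 0) :
    ∃ f : {v // C v = c} → {v // C v = !c},
      Function.Injective f ∧ ∀ a : {v // C v = c}, G.Adj a (f a) := by
  refine (Fintype.all_card_le_filter_rel_iff_exists_injective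
    fun (a : {v // C v = c}) (b : {v // C v = !c}) => G.Adj a b).1 fun A => ?_
  set X := A.map (Function.Embedding.subtype _)
  have hX : ∀ x ∈ X, C x = c := by simp +contextual [X]
  have hNX : neighborhood G X ⊆
      ({b | ∃ a ∈ A, G.Adj a b} : Finset {v // C v = !c}).map (Function.Embedding.subtype _) := by
    intro w hw
    obtain ⟨x, hx, hxw⟩ := mem_neighborhood.1 hw
    obtain ⟨a, ha, rfl⟩ : ∃ a ∈ A, a.1 = x := by simpa [X] using hx
    have hw' := Coloring.mem_colorFinset.1 (neighborhood_subset_colorFinset C hX hw)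
    exact mem_map.2 ⟨⟨w, hw'⟩, mem_filter.2 ⟨mem_univ _, a, ha, hxw⟩, rfl⟩
  have := hdef X hX
  have := card_le_card hNX
  rw [card_map] at this
  simp only [deficiency, X, card_map] at *
  omega

end HallCondition

lemma hasPerfectMatching_of_forall_exists_notMem [Fintype V] {G : SimpleGraph V}
    (C : G.Coloring Bool) (hcore : ∀ v, ∃ S, IsMaxStableSet G S ∧ v ∉ S) :
    HasPerfectMatching G := by
  classical
  have hHall (c : Bool) := exists_injective_adj_of_deficiency_le_zero C (c := c)
    fun _ => deficiency_le_zero_of_forall_exists_notMem C hcore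
  obtain ⟨f, hf, hfadj⟩ := hHall true
  obtain ⟨g, hg, hgadj⟩ := hHall false
  obtain ⟨e, he, headj⟩ := Function.Embedding.schroeder_bernstein_of_rel hf hg
    (fun a b => G.Adj a b) hfadj fun b => (hgadj b).symm
  obtain ⟨M, hMverts, hM⟩ := Subgraph.IsMatching.exists_of_disjoint_sets_of_equiv
    (s := {v | C v = true}) (t := {v | C v = false}) (by simp [Set.disjoint_left])
    (Equiv.ofBijective e he) headj
  refine Subgraph.IsPerfectMatching.hasPerfectMatching ⟨hM, Subgraph.isSpanning_iff.2 ?_⟩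
  simp [hMverts, Set.eq_univ_iff_forall]

theorem stmt_14 [Fintype V] (G : SimpleGraph V)
    (hbip : G.Colorable 2) :
    HasPerfectMatching G ↔
      {v : V | ∀ S : Finset V, IsMaxStableSet G S → v ∈ S} = ∅ := by
  let C : G.Coloring Bool := G.recolorOfEquiv finTwoEquiv hbip.some
  simp only [Set.eq_empty_iff_forall_notMem, Set.mem_ofPred_eq, not_forall, exists_prop]
  exact ⟨fun hM => hM.exists_isMaxStableSet_notMem C, hasPerfectMatching_of_forall_exists_notMem C⟩
end

section
/- A König-Egerváry graph G has a perfect matching if and only if |∩{S : S ∈ Ω(G)}| = |∩{V − S : S ∈ Ω(G)}|, i.e., the number of vertices common to all maximum stable sets equals the number of vertices belonging to no maximum stable set. -/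
open Finset

variable {V : Type*}

lemma stab_bdd [Fintype V] (G : SimpleGraph V) :
    BddAbove {n | ∃ s : Finset V, IsStableSet G s ∧ s.card = n} := by
  refine ⟨Fintype.card V, ?_⟩
  rintro n ⟨s, -, rfl⟩
  exact s.card_le_univ.trans_eq Finset.card_univ

lemma exists_maxStable [Fintype V] (G : SimpleGraph V) :
    ∃ S : Finset V, IsMaxStableSet G S := by
  have hne : {n | ∃ s : Finset V, IsStableSet G s ∧ s.card = n}.Nonempty :=
    ⟨0, ∅, by intro x hx; simp at hx, rfl⟩
  obtain ⟨s, hs, hc⟩ := Nat.sSup_mem hne (stab_bdd G)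
  exact ⟨s, hs, hc⟩

lemma stable_card_le [Fintype V] {G : SimpleGraph V} {s : Finset V}
    (hs : IsStableSet G s) : s.card ≤ stabNum G :=
  le_csSup (stab_bdd G) ⟨s, hs, rfl⟩

lemma match_bdd [Fintype V] (G : SimpleGraph V) :
    BddAbove {n | ∃ M : Finset (Sym2 V), IsMatchingSet G M ∧ M.card = n} := by
  classical
  refine ⟨Fintype.card (Sym2 V), ?_⟩
  rintro n ⟨M, -, rfl⟩
  exact M.card_le_univ.trans_eq Finset.card_univ

lemma exists_maxMatching [Fintype V] (G : SimpleGraph V) :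
    ∃ M : Finset (Sym2 V), IsMatchingSet G M ∧ M.card = matchNum G := by
  classical
  have hne : {n | ∃ M : Finset (Sym2 V), IsMatchingSet G M ∧ M.card = n}.Nonempty :=
    ⟨0, ∅, ⟨by intro e he; simp at he, by intro e he; simp at he⟩, rfl⟩
  obtain ⟨M, hM, hc⟩ := Nat.sSup_mem hne (match_bdd G)
  exact ⟨M, hM, hc⟩

lemma matching_card_le [Fintype V] {G : SimpleGraph V} {M : Finset (Sym2 V)}
    (hM : IsMatchingSet G M) : M.card ≤ matchNum G :=
  le_csSup (match_bdd G) ⟨M, hM, rfl⟩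
lemma edge_exists {G : SimpleGraph V} {e : Sym2 V} (he : e ∈ G.edgeSet) :
    ∃ a b : V, G.Adj a b ∧ e = s(a, b) := by
  revert he
  induction e using Sym2.ind with
  | _ a b => exact fun he => ⟨a, b, he, rfl⟩

/-- Key counting lemma for KE graphs. -/
lemma key [Fintype V] (G : SimpleGraph V) (hKE : KonigEgervary G)
    {M : Finset (Sym2 V)} (hM : IsMatchingSet G M) (hMc : M.card = matchNum G)
    {S : Finset V} (hS : IsMaxStableSet G S) :
    (∀ v ∉ S, ∃ e ∈ M, v ∈ e) ∧
    (∀ e ∈ M, ∀ a b : V, e = s(a, b) → (a ∈ S ↔ b ∉ S)) := by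
  classical
  set T : Finset V := Finset.univ \ S with hT
  have hTcard : T.card = matchNum G := by
    have h1 : T.card = Fintype.card V - S.card := by
      rw [hT, Finset.card_sdiff_of_subset (Finset.subset_univ S), Finset.card_univ]
    have h2 := hKE
    rw [KonigEgervary, Nat.card_eq_fintype_card] at h2
    have h3 : S.card ≤ Fintype.card V := Finset.card_le_univ S
    rw [h1, hS.2]; omega
  set F : Sym2 V → Finset V := fun e => T.filter (· ∈ e) with hF
  have hF1 : ∀ e ∈ M, 1 ≤ (F e).card := by
    intro e he
    obtain ⟨a, b, hab, rfl⟩ := edge_exists (hM.1 e he)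
    have hnb : ¬(a ∈ S ∧ b ∈ S) := fun ⟨ha, hb⟩ => hS.1 a ha b hb hab
    rcases em (a ∈ S) with ha | ha
    · have hb : b ∉ S := fun hb => hnb ⟨ha, hb⟩
      exact Finset.card_pos.mpr ⟨b, by simp [hF, hT, hb]⟩
    · exact Finset.card_pos.mpr ⟨a, by simp [hF, hT, ha]⟩
  have hdisjFn : ∀ e ∈ M, ∀ f ∈ M, e ≠ f → Disjoint (F e) (F f) := by
    intro e he f hf hef
    refine Finset.disjoint_left.mpr fun v hv hv' => ?_
    simp only [hF, Finset.mem_filter] at hv hv'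
    exact hM.2 e he f hf hef v hv.2 hv'.2
  have hsub : M.biUnion F ⊆ T := by
    intro v hv
    obtain ⟨e, _, hvF⟩ := Finset.mem_biUnion.mp hv
    exact (Finset.mem_filter.mp hvF).1
  have hge : M.card ≤ ∑ e ∈ M, (F e).card := by
    calc M.card = ∑ _e ∈ M, 1 := by simp
      _ ≤ ∑ e ∈ M, (F e).card := Finset.sum_le_sum hF1
  have hle : ∑ e ∈ M, (F e).card ≤ M.card := by
    calc ∑ e ∈ M, (F e).card = (M.biUnion F).card := (Finset.card_biUnion hdisjFn).symm
      _ ≤ T.card := Finset.card_le_card hsub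
      _ = M.card := by rw [hTcard, hMc]
  have heq : ∑ e ∈ M, (F e).card = M.card := le_antisymm hle hge
  have hbiU : M.biUnion F = T :=
    Finset.eq_of_subset_of_card_le hsub
      (by rw [Finset.card_biUnion hdisjFn, heq, hMc, hTcard])
  have hcard1 : ∀ e ∈ M, (F e).card = 1 := by
    by_contra h
    push_neg at h
    obtain ⟨e0, he0, hne⟩ := h
    have h2 : 1 < (F e0).card := lt_of_le_of_ne (hF1 e0 he0) (Ne.symm hne)
    have hlt := Finset.sum_lt_sum (f := fun _ => 1) (g := fun e => (F e).card)
      (fun i hi => hF1 i hi) ⟨e0, he0, h2⟩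
    simp only [Finset.sum_const, smul_eq_mul, mul_one] at hlt
    omega
  constructor
  · intro v hv
    have hvT : v ∈ T := by simp [hT, hv]
    rw [← hbiU] at hvT
    obtain ⟨e, he, hvF⟩ := Finset.mem_biUnion.mp hvT
    exact ⟨e, he, (Finset.mem_filter.mp hvF).2⟩
  · intro e he a b heab
    have hadj : G.Adj a b := by
      have h := hM.1 e he
      rw [heab] at h
      exact h
    have hne2 : a ≠ b := hadj.ne
    have hnb : ¬(a ∈ S ∧ b ∈ S) := fun ⟨ha, hb⟩ => hS.1 a ha b hb hadj
    have hnn : ¬(a ∉ S ∧ b ∉ S) := by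
      rintro ⟨ha, hb⟩
      have h1 : a ∈ F e := by simp [hF, hT, heab, ha]
      have h2 : b ∈ F e := by simp [hF, hT, heab, hb]
      have : 1 < (F e).card := Finset.one_lt_card.mpr ⟨a, h1, b, h2, hne2⟩
      rw [hcard1 e he] at this
      exact lt_irrefl 1 this
    tauto


lemma master [Fintype V] (G : SimpleGraph V) (hKE : KonigEgervary G)
    {M : Finset (Sym2 V)} (hM : IsMatchingSet G M) (hMc : M.card = matchNum G) :
    {v : V | ∀ S : Finset V, IsMaxStableSet G S → v ∈ S}.ncard =
      {v : V | ∀ S : Finset V, IsMaxStableSet G S → v ∉ S}.ncard +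
      {v : V | ∀ e ∈ M, v ∉ e}.ncard := by
  classical
  obtain ⟨S0, hS0⟩ := exists_maxStable G
  set core : Set V := {v : V | ∀ S : Finset V, IsMaxStableSet G S → v ∈ S} with hcore
  set A : Set V := {v : V | ∀ S : Finset V, IsMaxStableSet G S → v ∉ S} with hA
  set uns : Set V := {v : V | ∀ e ∈ M, v ∉ e} with huns
  set sat : Set V := {v : V | ∃ e ∈ M, v ∈ e} with hsat
  have hpart : ∀ v ∈ sat, ∃ w, w ≠ v ∧ s(v, w) ∈ M := by
    rintro v ⟨e, he, hve⟩
    obtain ⟨a, b, hadj, rfl⟩ := edge_exists (hM.1 e he)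
    rcases Sym2.mem_iff.mp hve with rfl | rfl
    · exact ⟨b, hadj.ne', he⟩
    · exact ⟨a, hadj.ne, by rwa [Sym2.eq_swap]⟩
  have huniq : ∀ v w w' : V, s(v, w) ∈ M → s(v, w') ∈ M → w ≠ v → w = w' := by
    intro v w w' h1 h2 hwv
    have heq : s(v, w) = s(v, w') := by
      by_contra hne
      exact hM.2 _ h1 _ h2 hne v (Sym2.mem_mk_left v w) (Sym2.mem_mk_left v w')
    rcases Sym2.eq_iff.mp heq with ⟨-, h⟩ | ⟨-, h⟩
    · exact h
    · exact absurd h hwv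
  set f : V → V := fun v => if h : ∃ w, w ≠ v ∧ s(v, w) ∈ M then h.choose else v with hf
  have hpartner : ∀ v ∈ sat, f v ≠ v ∧ s(v, f v) ∈ M := by
    intro v hv
    have hex := hpart v hv
    simp only [hf, dif_pos hex]
    exact hex.choose_spec
  have hfuniq : ∀ v w : V, w ≠ v → s(v, w) ∈ M → f v = w := by
    intro v w hwv hm
    have hvs : v ∈ sat := ⟨s(v, w), hm, Sym2.mem_mk_left v w⟩
    obtain ⟨h1, h2⟩ := hpartner v hvs
    exact huniq v (f v) w h2 hm h1
  have hswap : ∀ v w : V, s(v, w) ∈ M →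
      ∀ S : Finset V, IsMaxStableSet G S → (v ∈ S ↔ w ∉ S) :=
    fun v w h S hS => (key G hKE hM hMc hS).2 _ h v w rfl
  have hAsat : A ⊆ sat := by
    intro v hv
    exact (key G hKE hM hMc hS0).1 v (hv S0 hS0)
  have hunscore : uns ⊆ core := by
    intro v hv S hS
    by_contra hvS
    obtain ⟨e, he, hve⟩ := (key G hKE hM hMc hS).1 v hvS
    exact hv e he hve
  have hbij : Set.BijOn f (core ∩ sat) A := by
    refine ⟨?_, ?_, ?_⟩
    · rintro v ⟨hvc, hvs⟩ S hS
      obtain ⟨hne, hm⟩ := hpartner v hvs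
      exact (hswap v (f v) hm S hS).mp (hvc S hS)
    · rintro v1 ⟨-, hv1s⟩ v2 ⟨-, hv2s⟩ heq
      obtain ⟨hne1, hm1⟩ := hpartner v1 hv1s
      obtain ⟨hne2, hm2⟩ := hpartner v2 hv2s
      rw [heq] at hm1 hne1
      have hm1' : s(f v2, v1) ∈ M := by rwa [Sym2.eq_swap]
      have hm2' : s(f v2, v2) ∈ M := by rwa [Sym2.eq_swap]
      exact huniq (f v2) v1 v2 hm1' hm2' (fun h => hne1 h.symm)
    · intro w hw
      have hws : w ∈ sat := hAsat hw
      obtain ⟨hne, hm⟩ := hpartner w hws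
      set v := f w with hv
      have hm' : s(v, w) ∈ M := by rwa [Sym2.eq_swap]
      refine ⟨v, ⟨?_, ⟨s(v, w), hm', Sym2.mem_mk_left v w⟩⟩, ?_⟩
      · intro S hS
        exact (hswap v w hm' S hS).mpr (hw S hS)
      · exact hfuniq v w (fun h => hne h.symm) hm'
  have hcover : core = (core ∩ sat) ∪ uns := by
    ext v
    constructor
    · intro hv
      rcases em (v ∈ sat) with h | h
      · exact Or.inl ⟨hv, h⟩
      · exact Or.inr fun e he hve => h ⟨e, he, hve⟩
    · rintro (⟨hv, -⟩ | hv)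
      · exact hv
      · exact hunscore hv
  have hdisj2 : Disjoint (core ∩ sat) uns := by
    rw [Set.disjoint_left]
    rintro v ⟨-, e, he, hve⟩ hu
    exact hu e he hve
  rw [hcover, Set.ncard_union_eq hdisj2 (Set.toFinite _) (Set.toFinite _)]
  congr 1
  rw [← hbij.image_eq, Set.ncard_image_of_injOn hbij.injOn]

lemma matching_two_mul [Fintype V] {G : SimpleGraph V} {M : Finset (Sym2 V)}
    (hM : IsMatchingSet G M) :
    2 * M.card ≤ Fintype.card V ∧
      ((∀ v : V, ∃ e ∈ M, v ∈ e) → 2 * M.card = Fintype.card V) := by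
  classical
  set F : Sym2 V → Finset V := fun e => Finset.univ.filter (· ∈ e) with hF
  have hdisjFn : ∀ e ∈ M, ∀ f ∈ M, e ≠ f → Disjoint (F e) (F f) := by
    intro e he f hf hef
    refine Finset.disjoint_left.mpr fun v hv hv' => ?_
    simp only [hF, Finset.mem_filter] at hv hv'
    exact hM.2 e he f hf hef v hv.2 hv'.2
  have hc2 : ∀ e ∈ M, (F e).card = 2 := by
    intro e he
    obtain ⟨a, b, hadj, rfl⟩ := edge_exists (hM.1 e he)
    have hFe : F s(a, b) = {a, b} := by
      ext v
      simp [hF, Sym2.mem_iff]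
    rw [hFe, Finset.card_insert_of_notMem (by simp [hadj.ne]), Finset.card_singleton]
  have hcb : (M.biUnion F).card = 2 * M.card := by
    rw [Finset.card_biUnion hdisjFn, Finset.sum_congr rfl hc2, Finset.sum_const,
      smul_eq_mul, mul_comm]
  constructor
  · rw [← hcb, ← Finset.card_univ]
    exact Finset.card_le_card (Finset.subset_univ _)
  · intro hall
    have huniv : M.biUnion F = Finset.univ := by
      refine Finset.eq_univ_of_forall fun v => ?_
      obtain ⟨e, he, hv⟩ := hall v
      exact Finset.mem_biUnion.mpr ⟨e, he, by simp [hF, hv]⟩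
    rw [← hcb, huniv, Finset.card_univ]


theorem stmt_19 [Fintype V] (G : SimpleGraph V)
    (hKE : KonigEgervary G) :
    HasPerfectMatching G ↔
      {v : V | ∀ S : Finset V, IsMaxStableSet G S → v ∈ S}.ncard =
        {v : V | ∀ S : Finset V, IsMaxStableSet G S → v ∉ S}.ncard := by
  classical
  constructor
  · rintro ⟨M', hM', hall⟩
    have h2 := (matching_two_mul hM').2 hall
    have hle' : M'.card ≤ matchNum G := matching_card_le hM'
    have hge' : matchNum G ≤ M'.card := by
      have hne : {n | ∃ M : Finset (Sym2 V), IsMatchingSet G M ∧ M.card = n}.Nonempty :=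
        ⟨0, ∅, ⟨fun e he => by simp at he, fun e he => by simp at he⟩, rfl⟩
      apply csSup_le hne
      rintro n ⟨N, hN, rfl⟩
      have := (matching_two_mul hN).1
      omega
    have hMc' : M'.card = matchNum G := le_antisymm hle' hge'
    have hmaster' := master G hKE hM' hMc'
    have huns : {v : V | ∀ e ∈ M', v ∉ e} = ∅ := by
      refine Set.eq_empty_iff_forall_notMem.mpr fun v hv => ?_
      obtain ⟨e, he, hve⟩ := hall v
      exact hv e he hve
    rw [huns, Set.ncard_empty, add_zero] at hmaster'
    exact hmaster'
  · intro hcard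
    obtain ⟨M, hM, hMc⟩ := exists_maxMatching G
    have hmaster := master G hKE hM hMc
    have h0 : {v : V | ∀ e ∈ M, v ∉ e}.ncard = 0 := by omega
    have hemp : {v : V | ∀ e ∈ M, v ∉ e} = ∅ :=
      (Set.ncard_eq_zero (Set.toFinite _)).mp h0
    refine ⟨M, hM, fun v => ?_⟩
    by_contra h
    push_neg at h
    have hv : v ∈ {v : V | ∀ e ∈ M, v ∉ e} := h
    rw [hemp] at hv
    exact hv
end
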